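/- arXiv:2002.02125 — 2 statements merged into one kernel-verified Lean document; each statement's English description precedes it below -/
import Mathlib

section
/- Let T₁,...,T_N be i.i.d. shifted exponential (rate λ, shift c), T_N(K) the K-th order statistic, T_D > c, and n a fixed index. Then P(T_N(K) < min{T_D, T_n}) = ((N-K)/N)·(1 - Z_K), where Z_K := P(T_D < T_N(K)). -/
open MeasureTheory ProbabilityTheory Real Finset Filter

/-- The `k`-th order statistic (1-based): the `k`-th smallest value of `f`. -/
noncomputable def ordStat {N : ℕ} (f : Fin N → ℝ) (k : ℕ) : ℝ :=
  if h : k - 1 < N then f (Tuple.sort f ⟨k - 1, h⟩) else 0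

lemma ordStat_comp_perm {N : ℕ} (f : Fin N → ℝ) (σ : Equiv.Perm (Fin N)) (k : ℕ) :
    ordStat (f ∘ σ) k = ordStat f k := by
  unfold ordStat
  split_ifs with h
  · exact congrFun (Tuple.comp_perm_comp_sort_eq_comp_sort (f := f) (σ := σ)) ⟨k - 1, h⟩
  · rfl

lemma ordStat_mem_range {N : ℕ} (f : Fin N → ℝ) {k : ℕ} (h : k - 1 < N) :
    ordStat f k ∈ Set.range f := by
  rw [ordStat, dif_pos h]; exact ⟨_, rfl⟩

lemma ordStat_lt_iff {N : ℕ} (f : Fin N → ℝ) {k : ℕ} (hk1 : 1 ≤ k) (h : k - 1 < N) (t : ℝ) :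
    ordStat f k < t ↔ k ≤ (univ.filter fun i => f i < t).card := by
  set σ := Tuple.sort f with hσ
  have hmono : Monotone (f ∘ σ) := Tuple.monotone_sort f
  have hcard : (univ.filter fun j => f (σ j) < t).card
      = (univ.filter fun i => f i < t).card := by
    apply Finset.card_bij (fun j _ => σ j)
    · intro a ha; simp only [mem_filter, mem_univ, true_and] at ha ⊢; exact ha
    · intro a _ b _ hab; exact σ.injective hab
    · intro m hm
      refine ⟨σ.symm m, ?_, by simp⟩
      simp only [mem_filter, mem_univ, true_and] at hm ⊢
      simpa using hm
  rw [ordStat, dif_pos h, ← hcard]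
  constructor
  · intro hlt
    have hsub : Finset.Iic (⟨k - 1, h⟩ : Fin N) ⊆ univ.filter fun j => f (σ j) < t := by
      intro j hj
      simp only [Finset.mem_Iic] at hj
      simp only [mem_filter, mem_univ, true_and]
      calc f (σ j) ≤ f (σ ⟨k - 1, h⟩) := hmono hj
        _ < t := hlt
    have h2 := Finset.card_le_card hsub
    rw [Fin.card_Iic] at h2
    simp only [] at h2
    omega
  · intro hcardle
    by_contra hnot
    push_neg at hnot
    have hsub : (univ.filter fun j => f (σ j) < t) ⊆ Finset.Iio (⟨k - 1, h⟩ : Fin N) := by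
      intro j hj
      simp only [mem_filter, mem_univ, true_and] at hj
      simp only [Finset.mem_Iio]
      by_contra hle
      push_neg at hle
      have : f (σ ⟨k - 1, h⟩) ≤ f (σ j) := hmono hle
      exact absurd (lt_of_le_of_lt this hj) (not_lt.mpr hnot)
    have h2 := Finset.card_le_card hsub
    rw [Fin.card_Iio] at h2
    simp only [] at h2
    omega

lemma card_ordStat_lt {N : ℕ} (f : Fin N → ℝ) (hinj : Function.Injective f)
    {k : ℕ} (hk1 : 1 ≤ k) (hkN : k < N) :
    (univ.filter fun m => ordStat f k < f m).card = N - k := by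
  have h : k - 1 < N := by omega
  set σ := Tuple.sort f with hσ
  have hmono : Monotone (f ∘ σ) := Tuple.monotone_sort f
  have hsm : StrictMono (f ∘ σ) := hmono.strictMono_of_injective (hinj.comp σ.injective)
  have hcard : (univ.filter fun j => ordStat f k < f (σ j)).card
      = (univ.filter fun m => ordStat f k < f m).card := by
    apply Finset.card_bij (fun j _ => σ j)
    · intro a ha; simp only [mem_filter, mem_univ, true_and] at ha ⊢; exact ha
    · intro a _ b _ hab; exact σ.injective hab
    · intro m hm
      refine ⟨σ.symm m, ?_, by simp⟩
      simp only [mem_filter, mem_univ, true_and] at hm ⊢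
      simpa using hm
  rw [← hcard]
  have heq : (univ.filter fun j => ordStat f k < f (σ j)) = Finset.Ioi (⟨k - 1, h⟩ : Fin N) := by
    ext j
    simp only [mem_filter, mem_univ, true_and, Finset.mem_Ioi]
    rw [ordStat, dif_pos h]
    exact hsm.lt_iff_lt
  rw [heq, Fin.card_Ioi]
  simp only []
  omega

lemma measurableSet_ordStat_lt {N : ℕ} {k : ℕ} (hk1 : 1 ≤ k) (h : k - 1 < N) (t : ℝ) :
    MeasurableSet {g : Fin N → ℝ | ordStat g k < t} := by
  have hrep : {g : Fin N → ℝ | ordStat g k < t}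
      = ⋃ (s : Finset (Fin N)) (_ : k ≤ s.card), ⋂ i ∈ s, {g : Fin N → ℝ | g i < t} := by
    ext g
    simp only [Set.mem_setOf_eq, Set.mem_iUnion, Set.mem_iInter]
    rw [ordStat_lt_iff g hk1 h t]
    constructor
    · intro hc
      exact ⟨univ.filter fun i => g i < t, hc, fun i hi => (mem_filter.mp hi).2⟩
    · rintro ⟨s, hs, hall⟩
      refine hs.trans (Finset.card_le_card ?_)
      intro i hi; simp only [mem_filter, mem_univ, true_and]; exact hall i hi
  rw [hrep]
  exact MeasurableSet.iUnion fun s => MeasurableSet.iUnion fun _ =>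
    MeasurableSet.biInter s.countable_toSet fun i _ =>
      measurableSet_lt (measurable_pi_apply i) measurable_const

lemma measurable_ordStat {N : ℕ} {k : ℕ} (hk1 : 1 ≤ k) (h : k - 1 < N) :
    Measurable (fun g : Fin N → ℝ => ordStat g k) :=
  measurable_of_Iio fun t => measurableSet_ordStat_lt hk1 h t

theorem prob_orderStat_before_min {Ω : Type*} [MeasurableSpace Ω] (μ : Measure Ω)
    [IsProbabilityMeasure μ]
    (N K : ℕ) (hK1 : 1 ≤ K) (hKN : K < N)
    (lam c TD : ℝ) (hlam : 0 < lam) (hc : 0 < c) (hTD : c < TD)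
    (T : Fin N → Ω → ℝ)
    (hCDF : ∀ i : Fin N, ∀ t : ℝ,
      μ {ω | T i ω ≤ t} = ENNReal.ofReal (if t < c then 0 else 1 - Real.exp (-lam * (t - c))))
    (hmeas : ∀ i, Measurable (T i))
    (hindep : iIndepFun T μ)
    (n : Fin N)
    (Z : ℕ → ℝ) (hZ : ∀ h : ℕ, Z h = (μ {ω | TD < ordStat (fun i => T i ω) h}).toReal) :
    μ {ω | ordStat (fun i => T i ω) K < min TD (T n ω)} =
      ENNReal.ofReal ((((N : ℝ) - K) / N) * (1 - Z K)) := by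
  classical
  -- marginal laws
  have hlaw : ∀ i, μ.map (T i) = μ.map (T n) := by
    intro i
    refine Measure.ext_of_Iic _ _ (fun t => ?_)
    rw [Measure.map_apply (hmeas i) measurableSet_Iic,
        Measure.map_apply (hmeas n) measurableSet_Iic]
    show μ {ω | T i ω ≤ t} = μ {ω | T n ω ≤ t}
    rw [hCDF i t, hCDF n t]
  set m0 : Measure ℝ := μ.map (T n) with hm0
  haveI : IsProbabilityMeasure m0 := Measure.isProbabilityMeasure_map (hmeas n).aemeasurable
  -- CDF function
  set F : ℝ → ℝ := fun t => if t < c then 0 else 1 - Real.exp (-lam * (t - c)) with hFdef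
  have hFcont : Continuous F := by
    rw [hFdef]
    apply Continuous.if ?_ continuous_const (by continuity)
    intro a ha
    have hfr : frontier {x : ℝ | x < c} = {c} := by
      simpa [Set.Iio] using frontier_Iio (a := c)
    rw [hfr] at ha
    rcases ha with rfl
    simp
  have hF0 : ∀ t, 0 ≤ F t := by
    intro t
    rw [hFdef]
    dsimp only
    split_ifs with h
    · exact le_refl 0
    · push_neg at h
      have : Real.exp (-lam * (t - c)) ≤ 1 := by
        rw [Real.exp_le_one_iff]
        nlinarith
      linarith
  have hm0Iic : ∀ t, m0 (Set.Iic t) = ENNReal.ofReal (F t) := by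
    intro t
    rw [hm0, Measure.map_apply (hmeas n) measurableSet_Iic]
    show μ {ω | T n ω ≤ t} = _
    rw [hCDF n t]
  have hatom : ∀ t, m0 {t} = 0 := by
    intro t
    have key : ∀ ε : ℝ, 0 < ε → m0 {t} ≤ ENNReal.ofReal ε := by
      intro ε hε
      obtain ⟨δ, hδ, hδ2⟩ := Metric.continuous_iff.mp hFcont t ε hε
      set s := t - δ / 2 with hs
      have hst : s < t := by rw [hs]; linarith
      have hdist : dist s t < δ := by
        rw [Real.dist_eq, hs]; rw [abs_of_nonpos (by linarith)]; linarith
      have hFs : F t - F s < ε := by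
        have := hδ2 s hdist
        rw [Real.dist_eq] at this
        cases abs_lt.mp this with
        | intro h1 h2 => linarith
      have hsub : ({t} : Set ℝ) ⊆ Set.Iic t \ Set.Iic s := by
        intro x hx
        rcases hx with rfl
        exact ⟨Set.mem_Iic.mpr le_rfl, by simp [Set.mem_Iic]; linarith⟩
      calc m0 {t} ≤ m0 (Set.Iic t \ Set.Iic s) := measure_mono hsub
        _ = m0 (Set.Iic t) - m0 (Set.Iic s) :=
            measure_diff (Set.Iic_subset_Iic.mpr hst.le) measurableSet_Iic.nullMeasurableSet
              (measure_ne_top _ _)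
        _ = ENNReal.ofReal (F t) - ENNReal.ofReal (F s) := by rw [hm0Iic, hm0Iic]
        _ = ENNReal.ofReal (F t - F s) := (ENNReal.ofReal_sub _ (hF0 s)).symm
        _ ≤ ENNReal.ofReal ε := ENNReal.ofReal_le_ofReal hFs.le
    by_contra h0
    have hne : m0 {t} ≠ 0 := h0
    have hfin : m0 {t} ≠ ⊤ := measure_ne_top _ _
    have hpos : 0 < (m0 {t}).toReal := ENNReal.toReal_pos hne hfin
    have := key ((m0 {t}).toReal / 2) (by linarith)
    have hlt : ENNReal.ofReal ((m0 {t}).toReal / 2) < m0 {t} := by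
      rw [← ENNReal.ofReal_toReal hfin]
      rw [ENNReal.ofReal_lt_ofReal_iff hpos, ENNReal.toReal_ofReal hpos.le]
      linarith
    exact absurd this (not_le.mpr hlt)
  -- no ties
  have hpair : ∀ i j : Fin N, i ≠ j → μ {ω | T i ω = T j ω} = 0 := by
    intro i j hij
    have hIF : IndepFun (T i) (T j) μ := hindep.indepFun hij
    have hmap : μ.map (fun ω => (T i ω, T j ω)) = (μ.map (T i)).prod (μ.map (T j)) :=
      (indepFun_iff_map_prod_eq_prod_map_map (hmeas i).aemeasurable (hmeas j).aemeasurable).mp hIF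
    have hdiag : MeasurableSet {p : ℝ × ℝ | p.1 = p.2} :=
      measurableSet_eq_fun measurable_fst measurable_snd
    have heq : μ {ω | T i ω = T j ω}
        = ((μ.map (T i)).prod (μ.map (T j))) {p : ℝ × ℝ | p.1 = p.2} := by
      rw [← hmap, Measure.map_apply ((hmeas i).prodMk (hmeas j)) hdiag]
      rfl
    rw [heq, hlaw i, hlaw j, Measure.prod_apply hdiag]
    have hfib : ∀ x : ℝ, (Prod.mk x ⁻¹' {p : ℝ × ℝ | p.1 = p.2}) = {x} := by
      intro x; ext y; simp [eq_comm]
    simp_rw [hfib, hatom]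
    simp
  have hinj : ∀ᵐ ω ∂μ, Function.Injective (fun i => T i ω) := by
    rw [ae_iff]
    have hsub : {ω | ¬ Function.Injective (fun i => T i ω)} ⊆
        ⋃ (i : Fin N) (j : Fin N) (_ : i ≠ j), {ω | T i ω = T j ω} := by
      intro ω hω
      simp only [Set.mem_setOf_eq, Function.Injective, not_forall] at hω
      obtain ⟨i, j, hEq, hne⟩ := hω
      exact Set.mem_iUnion.mpr ⟨i, Set.mem_iUnion.mpr ⟨j, Set.mem_iUnion.mpr ⟨hne, hEq⟩⟩⟩
    exact measure_mono_null hsub (measure_iUnion_null fun i => measure_iUnion_null fun j =>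
      measure_iUnion_null fun hij => hpair i j hij)
  -- joint law
  set W : Ω → (Fin N → ℝ) := fun ω i => T i ω with hWdef
  have hWmeas : Measurable W := measurable_pi_lambda _ hmeas
  have hν : μ.map W = Measure.pi (fun _ : Fin N => m0) := by
    refine (Measure.pi_eq (μ := fun _ : Fin N => m0) (fun s hs => ?_)).symm
    rw [Measure.map_apply hWmeas (MeasurableSet.univ_pi hs)]
    have hpre : W ⁻¹' Set.pi Set.univ s = ⋂ i, T i ⁻¹' s i := by
      ext ω; simp [Set.mem_pi, hWdef]
    rw [hpre]
    have hint := hindep.measure_inter_preimage_eq_mul Finset.univ (sets := s)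
      (fun i _ => hs i)
    rw [show (⋂ i, T i ⁻¹' s i) = ⋂ i ∈ Finset.univ, T i ⁻¹' s i by simp]
    rw [hint]
    refine Finset.prod_congr rfl (fun i _ => ?_)
    rw [← hlaw i, Measure.map_apply (hmeas i) (hs i)]
  -- events
  have hKN' : K - 1 < N := by omega
  have hOSmeas : Measurable (fun g : Fin N → ℝ => ordStat g K) := measurable_ordStat hK1 hKN'
  set ES : Fin N → Set (Fin N → ℝ) :=
    fun m => {g | ordStat g K < TD ∧ ordStat g K < g m} with hESdef
  have hESmeas : ∀ m, MeasurableSet (ES m) := by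
    intro m
    have h1 : MeasurableSet {g : Fin N → ℝ | ordStat g K < TD} :=
      measurableSet_lt hOSmeas measurable_const
    have h2 : MeasurableSet {g : Fin N → ℝ | ordStat g K < g m} :=
      measurableSet_lt hOSmeas (measurable_pi_apply m)
    exact h1.inter h2
  -- exchangeability
  have hswap : ∀ m, (μ.map W) (ES m) = (μ.map W) (ES n) := by
    intro m
    rw [hν]
    set e : Equiv.Perm (Fin N) := Equiv.swap m n with hedef
    have hmp := measurePreserving_piCongrLeft (fun _ : Fin N => m0) e
    have hg : ∀ g : Fin N → ℝ,
        (MeasurableEquiv.piCongrLeft (fun _ : Fin N => ℝ) e) g = g ∘ e.symm := by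
      intro g
      funext b
      rw [MeasurableEquiv.coe_piCongrLeft]
      conv_lhs => rw [← e.apply_symm_apply b]
      rw [Equiv.piCongrLeft_apply_apply]
      rfl
    have hpre : (MeasurableEquiv.piCongrLeft (fun _ : Fin N => ℝ) e) ⁻¹' (ES n) = ES m := by
      ext g
      rw [Set.mem_preimage, hg g]
      show (ordStat (g ∘ ⇑e.symm) K < TD ∧ ordStat (g ∘ ⇑e.symm) K < (g ∘ ⇑e.symm) n)
        ↔ (ordStat g K < TD ∧ ordStat g K < g m)
      rw [ordStat_comp_perm g e.symm K]
      have : (g ∘ ⇑e.symm) n = g m := by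
        simp [hedef, Function.comp, Equiv.swap_apply_right]
      rw [this]
    calc (Measure.pi fun _ : Fin N => m0) (ES m)
        = (Measure.pi fun _ : Fin N => m0)
            ((MeasurableEquiv.piCongrLeft (fun _ : Fin N => ℝ) e) ⁻¹' (ES n)) := by rw [hpre]
      _ = (Measure.pi fun _ : Fin N => m0) (ES n) :=
          hmp.measure_preimage (hESmeas n).nullMeasurableSet
  -- events in Omega
  set A : Fin N → Set Ω := fun m => W ⁻¹' ES m with hAdef
  have hAmeas : ∀ m, MeasurableSet (A m) := fun m => hWmeas (hESmeas m)
  have hAn : ∀ m, μ (A m) = (μ.map W) (ES m) := by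
    intro m
    rw [Measure.map_apply hWmeas (hESmeas m)]
  set B : Set Ω := {ω | ordStat (fun i => T i ω) K < TD} with hBdef
  have hBmeas : MeasurableSet B :=
    measurableSet_lt (hOSmeas.comp hWmeas) measurable_const
  -- sum identity
  have hsum : ∑ m : Fin N, μ (A m) = ((N - K : ℕ) : ENNReal) * μ B := by
    have h1 : ∀ m : Fin N, μ (A m) = ∫⁻ ω, (A m).indicator (fun _ => (1 : ENNReal)) ω ∂μ :=
      fun m => (lintegral_indicator_one (hAmeas m)).symm
    simp_rw [h1]
    rw [← lintegral_finset_sum _ (fun m _ => measurable_const.indicator (hAmeas m))]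
    have h2 : ∀ᵐ ω ∂μ, ∑ m : Fin N, (A m).indicator (fun _ => (1 : ENNReal)) ω
        = ((N - K : ℕ) : ENNReal) * B.indicator (fun _ => (1 : ENNReal)) ω := by
      filter_upwards [hinj] with ω hω
      by_cases hB : ω ∈ B
      · have hmem : ∀ m : Fin N, (ω ∈ A m) ↔ ordStat (fun i => T i ω) K < T m ω := by
          intro m
          constructor
          · exact fun h => h.2
          · exact fun h => ⟨hB, h⟩
        have h3 : ∀ m : Fin N, (A m).indicator (fun _ => (1 : ENNReal)) ω
            = if ordStat (fun i => T i ω) K < T m ω then 1 else 0 := by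
          intro m
          rw [Set.indicator_apply]
          by_cases h : ω ∈ A m
          · rw [if_pos h, if_pos ((hmem m).mp h)]
          · rw [if_neg h, if_neg (fun hh => h ((hmem m).mpr hh))]
        simp_rw [h3]
        rw [Finset.sum_boole]
        rw [Set.indicator_of_mem hB, mul_one]
        norm_cast
        exact card_ordStat_lt (fun i => T i ω) hω hK1 hKN
      · have h3 : ∀ m : Fin N, (A m).indicator (fun _ => (1 : ENNReal)) ω = 0 := by
          intro m
          rw [Set.indicator_of_notMem]
          exact fun h => hB h.1
        simp_rw [h3]
        rw [Set.indicator_of_notMem hB, mul_zero, Finset.sum_const_zero]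
    rw [lintegral_congr_ae h2, lintegral_const_mul _ (measurable_const.indicator hBmeas)]
    congr 1
    exact lintegral_indicator_one hBmeas
  -- all A m have the same measure
  have hAeq : ∀ m : Fin N, μ (A m) = μ (A n) := by
    intro m
    rw [hAn m, hAn n, hswap m]
  have hNsum : (N : ENNReal) * μ (A n) = ((N - K : ℕ) : ENNReal) * μ B := by
    rw [← hsum]
    rw [Finset.sum_congr rfl (fun m _ => hAeq m), Finset.sum_const, Finset.card_univ,
      Fintype.card_fin, nsmul_eq_mul]
  -- boundary event has measure zero
  have hEq0 : μ {ω | ordStat (fun i => T i ω) K = TD} = 0 := by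
    have hsub : {ω | ordStat (fun i => T i ω) K = TD} ⊆ ⋃ i, {ω | T i ω = TD} := by
      intro ω hω
      obtain ⟨i, hi⟩ := ordStat_mem_range (fun i => T i ω) hKN'
      exact Set.mem_iUnion.mpr ⟨i, show T i ω = TD from hi.trans hω⟩
    refine measure_mono_null hsub (measure_iUnion_null fun i => ?_)
    have heq : μ {ω | T i ω = TD} = (μ.map (T i)) {TD} := by
      rw [Measure.map_apply (hmeas i) (measurableSet_singleton TD)]
      rfl
    rw [heq, hlaw i]
    exact hatom TD
  set Zs : Set Ω := {ω | TD < ordStat (fun i => T i ω) K} with hZsdef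
  have hμBc : μ Bᶜ = μ Zs := by
    have hsplit : Bᶜ = Zs ∪ {ω | ordStat (fun i => T i ω) K = TD} := by
      ext ω
      simp only [Set.mem_compl_iff, hBdef, hZsdef, Set.mem_setOf_eq, Set.mem_union, not_lt]
      constructor
      · intro h
        rcases lt_or_eq_of_le h with h | h
        · exact Or.inl h
        · exact Or.inr h.symm
      · rintro (h | h)
        · exact h.le
        · exact h.ge
    refine le_antisymm ?_ (measure_mono (by rw [hsplit]; exact Set.subset_union_left))
    rw [hsplit]
    calc μ (Zs ∪ {ω | ordStat (fun i => T i ω) K = TD})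
        ≤ μ Zs + μ {ω | ordStat (fun i => T i ω) K = TD} := measure_union_le _ _
      _ = μ Zs := by rw [hEq0, add_zero]
  have hZs1 : μ Zs = 1 - μ B := by
    rw [← hμBc, measure_compl hBmeas (measure_ne_top _ _), measure_univ]
  have hB1 : μ B = 1 - μ Zs := by
    rw [hZs1, ENNReal.sub_sub_cancel ENNReal.one_ne_top prob_le_one]
  -- final assembly
  have hN0 : (N : ENNReal) ≠ 0 := Nat.cast_ne_zero.mpr (by omega)
  have hNt : (N : ENNReal) ≠ ⊤ := ENNReal.natCast_ne_top N
  have hAn_val : μ (A n) = (((N - K : ℕ) : ENNReal) * μ B) / (N : ENNReal) :=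
    (ENNReal.eq_div_iff hN0 hNt).mpr hNsum
  have hgoal_set : {ω | ordStat (fun i => T i ω) K < min TD (T n ω)} = A n := by
    ext ω
    simp only [hAdef, Set.mem_setOf_eq, Set.mem_preimage, hESdef, lt_min_iff]
    exact Iff.rfl
  have hofr : ENNReal.ofReal (1 - (μ Zs).toReal) = 1 - μ Zs := by
    rw [show (1 : ℝ) - (μ Zs).toReal = ((1 : ENNReal) - μ Zs).toReal by
        rw [ENNReal.toReal_sub_of_le prob_le_one ENNReal.one_ne_top, ENNReal.toReal_one]]
    exact ENNReal.ofReal_toReal (by finiteness)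
  have hfinal : μ {ω | ordStat (fun i => T i ω) K < min TD (T n ω)}
      = ENNReal.ofReal ((((N : ℝ) - K) / N) * (1 - (μ Zs).toReal)) := by
    rw [hgoal_set, hAn_val]
    rw [show ((N : ℝ) - K) = ((N - K : ℕ) : ℝ) by rw [Nat.cast_sub hKN.le]]
    rw [ENNReal.ofReal_mul (by positivity)]
    have hNpos : (0 : ℝ) < (N : ℝ) := by exact_mod_cast (by omega : 0 < N)
    rw [ENNReal.ofReal_div_of_pos hNpos, ENNReal.ofReal_natCast,
      ENNReal.ofReal_natCast, hofr, ← hB1]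
    rw [div_eq_mul_inv, div_eq_mul_inv, mul_right_comm]
  rw [hZ K]
  exact hfinal
end

section
/- Let T₁,...,T_N be i.i.d. shifted exponential (rate λ, shift c), T_N(K) the K-th order statistic, and T_D > c. Then the conditional second moment E[T_N(K)² | T_N(K) < T_D] equals (1/(1 - Z_K)) · Σ_{j=0}^{K-1} (B_{K,j}/(λ²·U_{K,j}³)) · [(1 + c·λ·U_{K,j})² + 1 - ((1 + T_D·λ·U_{K,j})² + 1)·V_{K,j}], with B_{K,j}, U_{K,j}, V_{K,j}, Z_K defined as B_{K,j} = K·C(N,K)·C(K-1,j)·(-1)^j, U_{K,j} = N-K+1+j, V_{K,j} = exp(-λ·U_{K,j}·(T_D - c)), Z_K = Σ_{j=0}^{K-1} B_{K,j}·V_{K,j}/U_{K,j}. -/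
open MeasureTheory ProbabilityTheory Real Finset Filter

/-- `B_{K,j} = K·C(N,K)·C(K-1,j)·(-1)^j`. -/
noncomputable def Bc (N K j : ℕ) : ℝ := (K : ℝ) * (N.choose K) * ((K - 1).choose j) * (-1) ^ j

/-- `U_{K,j} = N - K + 1 + j`. -/
noncomputable def Uc (N K j : ℕ) : ℝ := (N : ℝ) - (K : ℝ) + 1 + (j : ℝ)

/-- `V_{K,j} = exp(-λ·U_{K,j}·(T_D - c))`. -/
noncomputable def Vc (lam c TD : ℝ) (N K j : ℕ) : ℝ := Real.exp (-lam * Uc N K j * (TD - c))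

/-- `Z_K = Σ_{j<K} B_{K,j}·V_{K,j}/U_{K,j}` (closed form of `P(T_D < T_N(K))`). -/
noncomputable def Zc (lam c TD : ℝ) (N K : ℕ) : ℝ :=
  ∑ j ∈ Finset.range K, Bc N K j * Vc lam c TD N K j / Uc N K j

lemma ordStat_le_iff {N : ℕ} (f : Fin N → ℝ) {K : ℕ} (hK1 : 1 ≤ K) (hKN : K ≤ N) (t : ℝ) :
    ordStat f K ≤ t ↔ K ≤ (Finset.univ.filter fun i => f i ≤ t).card := by
  have h : K - 1 < N := by omega
  rw [ordStat, dif_pos h]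
  have hmono := Tuple.monotone_sort f
  have := Tuple.lt_card_le_iff_apply_le_of_monotone (f := f ∘ Tuple.sort f) (a := t) (j := ⟨K - 1, h⟩) hmono
  rw [show (f ∘ Tuple.sort f) ⟨K-1,h⟩ = f (Tuple.sort f ⟨K-1,h⟩) from rfl] at this
  rw [← this]
  have hcard : Fintype.card {i // (f ∘ Tuple.sort f) i ≤ t} = Fintype.card {i // f i ≤ t} :=
    Fintype.card_congr ((Tuple.sort f).subtypeEquiv (fun i => Iff.rfl))
  rw [← Fintype.card_subtype, hcard, Fintype.card_subtype]
  simp only [Fin.lt_iff_val_lt_val]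
  constructor
  · intro hlt; simpa using by omega
  · intro hle; simpa using by omega

lemma meas_count_ge {Ω : Type*} [MeasurableSpace Ω] (μ : Measure Ω) [IsProbabilityMeasure μ]
    {N : ℕ} (T : Fin N → Ω → ℝ) (hmeas : ∀ i, Measurable (T i))
    (hindep : iIndepFun T μ)
    (t p : ℝ) (hp0 : 0 ≤ p) (hp1 : p ≤ 1)
    (hP : ∀ i, μ {ω | T i ω ≤ t} = ENNReal.ofReal p) (K : ℕ) :
    μ {ω | K ≤ (Finset.univ.filter fun i => T i ω ≤ t).card}
      = ENNReal.ofReal (∑ m ∈ Finset.Icc K N, (N.choose m : ℝ) * p^m * (1-p)^(N-m)) := by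
  classical
  set cnt : Ω → Finset (Fin N) := fun ω => Finset.univ.filter fun i => T i ω ≤ t with hcnt
  -- each "exact success set" event
  set E : Finset (Fin N) → Set Ω := fun S => {ω | cnt ω = S} with hE
  have hEi : ∀ S : Finset (Fin N), E S = ⋂ i, (if i ∈ S then T i ⁻¹' Set.Iic t else (T i ⁻¹' Set.Iic t)ᶜ) := by
    intro S
    ext ω
    simp only [hE, Set.mem_setOf_eq, Set.mem_iInter, hcnt]
    constructor
    · intro h i
      by_cases hi : i ∈ S <;> simp only [hi, if_true, if_false, Set.mem_preimage,
        Set.mem_compl_iff, Set.mem_Iic] <;> rw [← h] at hi <;> simp [Finset.mem_filter] at hi <;>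
        simpa using hi
    · intro h
      ext i
      have := h i
      by_cases hi : i ∈ S <;> simp only [hi, if_true, if_false, Set.mem_preimage,
        Set.mem_compl_iff, Set.mem_Iic] at this <;> simp [Finset.mem_filter, hi] <;> [skip; linarith] <;> tauto
  have hmeasE : ∀ S, MeasurableSet (E S) := by
    intro S
    rw [hEi]
    refine MeasurableSet.iInter fun i => ?_
    by_cases hi : i ∈ S <;> simp only [hi, if_true, if_false]
    · exact (hmeas i) measurableSet_Iic
    · exact ((hmeas i) measurableSet_Iic).compl
  have hsingle : ∀ i : Fin N, μ (T i ⁻¹' Set.Iic t) = ENNReal.ofReal p := fun i => hP i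
  have hcompl : ∀ i : Fin N, μ ((T i ⁻¹' Set.Iic t)ᶜ) = ENNReal.ofReal (1 - p) := by
    intro i
    rw [measure_compl ((hmeas i) measurableSet_Iic) (measure_ne_top μ _), hsingle i,
      measure_univ, ← ENNReal.ofReal_one, ← ENNReal.ofReal_sub _ hp0]
  have hmeasES : ∀ S : Finset (Fin N),
      μ (E S) = ENNReal.ofReal (p ^ S.card * (1-p) ^ (N - S.card)) := by
    intro S
    rw [hEi]
    rw [hindep.meas_iInter (fun i => ?_)]
    · have : ∀ i : Fin N, μ (if i ∈ S then T i ⁻¹' Set.Iic t else (T i ⁻¹' Set.Iic t)ᶜ)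
          = if i ∈ S then ENNReal.ofReal p else ENNReal.ofReal (1-p) := by
        intro i; by_cases hi : i ∈ S <;> simp [hi, hsingle i, hcompl i]
      simp_rw [this]
      rw [Finset.prod_ite, Finset.prod_const, Finset.prod_const]
      have h1 : #(Finset.filter (fun x => x ∈ S) Finset.univ) = S.card := by
        simp
      have h2 : #(Finset.filter (fun x => x ∉ S) Finset.univ) = N - S.card := by
        simp [Finset.filter_not, Finset.card_sdiff_of_subset (Finset.subset_univ S)]
      rw [h1, h2, ENNReal.ofReal_mul (by positivity), ENNReal.ofReal_pow hp0,
        ENNReal.ofReal_pow (by linarith)]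
    · by_cases hi : i ∈ S <;> simp only [hi, if_true, if_false]
      · exact ⟨Set.Iic t, measurableSet_Iic, rfl⟩
      · exact MeasurableSet.compl ⟨Set.Iic t, measurableSet_Iic, rfl⟩
  
  have hset : {ω | K ≤ (cnt ω).card}
      = ⋃ S ∈ (Finset.univ.filter fun S : Finset (Fin N) => K ≤ S.card), E S := by
    ext ω
    simp only [Set.mem_setOf_eq, Set.mem_iUnion, hE, Finset.mem_filter, Finset.mem_univ, true_and]
    exact ⟨fun h => ⟨cnt ω, h, rfl⟩, fun ⟨S, hS, hc⟩ => hc ▸ hS⟩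
  have hdisj : Set.PairwiseDisjoint
      ↑(Finset.univ.filter fun S : Finset (Fin N) => K ≤ S.card) E := by
    intro S₁ _ S₂ _ hne
    refine Set.disjoint_left.2 fun ω h1 h2 => hne ?_
    rw [← h1, ← h2]
  rw [show {ω | K ≤ #(Finset.univ.filter fun i => T i ω ≤ t)} = {ω | K ≤ (cnt ω).card} from rfl,
    hset, measure_biUnion_finset hdisj (fun S _ => hmeasE S)]
  simp_rw [hmeasES]
  have hfib : (Finset.univ.filter fun S : Finset (Fin N) => K ≤ S.card)
      = (Finset.Icc K N).biUnion (fun m => Finset.powersetCard m (Finset.univ : Finset (Fin N))) := by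
    ext S
    simp only [Finset.mem_filter, Finset.mem_univ, true_and, Finset.mem_biUnion,
      Finset.mem_Icc, Finset.mem_powersetCard]
    constructor
    · intro h
      exact ⟨S.card, ⟨h, by simpa using Finset.card_le_card (Finset.subset_univ S)⟩,
        Finset.subset_univ S, rfl⟩
    · rintro ⟨m, ⟨hm, _⟩, _, rfl⟩; exact hm
  rw [hfib, Finset.sum_biUnion ?hd]
  case hd =>
    intro m₁ _ m₂ _ hne
    refine Finset.disjoint_left.2 fun S h1 h2 => hne ?_
    rw [Finset.mem_powersetCard] at h1 h2
    rw [← h1.2, ← h2.2]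
  have hinner : ∀ m ∈ Finset.Icc K N,
      ∑ S ∈ Finset.powersetCard m (Finset.univ : Finset (Fin N)),
        ENNReal.ofReal (p ^ S.card * (1-p) ^ (N - S.card))
      = ENNReal.ofReal ((N.choose m : ℝ) * p^m * (1-p)^(N-m)) := by
    intro m _
    rw [Finset.sum_congr rfl (fun S hS => ?_), Finset.sum_const]
    · rw [Finset.card_powersetCard, Finset.card_univ, Fintype.card_fin, nsmul_eq_mul,
        ← ENNReal.ofReal_natCast, ← ENNReal.ofReal_mul (by positivity), mul_assoc]
    · rw [Finset.mem_powersetCard] at hS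
      rw [hS.2]
  rw [Finset.sum_congr rfl hinner, ← ENNReal.ofReal_sum_of_nonneg]
  intro m _
  have h1p : (0:ℝ) ≤ 1 - p := by linarith
  positivity

noncomputable def phiP (N K : ℕ) (p : ℝ) : ℝ :=
  ∑ m ∈ Finset.Icc K N, (N.choose m : ℝ) * p^m * (1-p)^(N-m)

lemma phiP_hasDerivAt {N K : ℕ} (hK1 : 1 ≤ K) (hKN : K ≤ N) (p : ℝ) :
    HasDerivAt (phiP N K)
      ((K:ℝ) * (N.choose K) * p^(K-1) * (1-p)^(N-K)) p := by
  classical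
  set a : ℕ → ℝ := fun i => (N.choose i : ℝ) * i * p^(i-1) * (1-p)^(N-i) with ha
  have hterm : ∀ i ∈ Finset.Icc K N,
      HasDerivAt (fun q : ℝ => (N.choose i : ℝ) * q^i * (1-q)^(N-i)) (a i - a (i+1)) p := by
    intro i hi
    rw [Finset.mem_Icc] at hi
    have h1 : HasDerivAt (fun q : ℝ => (N.choose i : ℝ) * q^i)
        ((N.choose i : ℝ) * (i * p^(i-1))) p := (hasDerivAt_pow i p).const_mul _
    have h2 : HasDerivAt (fun q : ℝ => (1-q)^(N-i)) (-((N-i : ℕ) * (1-p)^(N-i-1))) p := by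
      have hinner : HasDerivAt (fun q : ℝ => 1 - q) (-1) p := by
        simpa using (hasDerivAt_id p).const_sub 1
      simpa [mul_comm, Function.comp_def] using (hasDerivAt_pow (N-i) (1-p)).comp p hinner
    have := h1.mul h2
    refine this.congr_deriv ?_
    have hcast : ((N - i : ℕ) : ℝ) = (N : ℝ) - i := by
      rw [Nat.cast_sub hi.2]
    have hkey : ((N.choose (i+1) : ℝ)) * (i+1) = (N.choose i : ℝ) * ((N:ℝ) - i) := by
      rw [← hcast]
      exact_mod_cast congrArg (Nat.cast (R := ℝ)) (Nat.choose_succ_right_eq N i)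
    have hNi : N - (i+1) = N - i - 1 := by omega
    rw [ha]
    simp only [hNi]
    rw [hcast]
    have hi1 : (i+1) - 1 = i := by omega
    rw [hi1]
    push_cast
    push_cast at hkey
    linear_combination (p ^ i * (1 - p) ^ (N - i - 1)) * hkey
  have hsum := HasDerivAt.fun_sum hterm
  have : phiP N K = fun q : ℝ => ∑ i ∈ Finset.Icc K N, (N.choose i : ℝ) * q^i * (1-q)^(N-i) := by
    funext q; rfl
  rw [this]
  refine hsum.congr_deriv ?_
  rw [← Finset.Ico_add_one_right_eq_Icc, Finset.sum_Ico_eq_sum_range]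
  have htel : ∑ i ∈ Finset.range (N + 1 - K), (a (K + i) - a (K + i + 1))
      = a K - a (K + (N + 1 - K)) := by
    have := Finset.sum_range_sub' (fun i => a (K + i)) (N + 1 - K)
    simpa [add_assoc] using this
  have hKN1 : K + (N + 1 - K) = N + 1 := by omega
  have haN1 : a (N+1) = 0 := by
    simp [ha, Nat.choose_succ_self]
  rw [htel, hKN1, haN1, sub_zero, ha]
  ring


noncomputable def densF (lam c : ℝ) (N K : ℕ) (s : ℝ) : ℝ :=
  (K:ℝ) * (N.choose K) * (1 - Real.exp (-lam*(s-c)))^(K-1)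
    * (Real.exp (-lam*(s-c)))^(N-K) * (lam * Real.exp (-lam*(s-c)))

lemma Uc_cast {N K : ℕ} (hKN : K ≤ N) (j : ℕ) : Uc N K j = ((N - K + 1 + j : ℕ) : ℝ) := by
  rw [Uc]; push_cast [Nat.cast_sub hKN]; ring

lemma Uc_pos {N K : ℕ} (hKN : K ≤ N) (j : ℕ) : 0 < Uc N K j := by
  rw [Uc_cast hKN]; positivity

lemma densF_eq {lam c : ℝ} {N K : ℕ} (hK1 : 1 ≤ K) (hKN : K ≤ N) (s : ℝ) :
    densF lam c N K s
      = ∑ j ∈ Finset.range K, Bc N K j * (lam * Real.exp (-lam * Uc N K j * (s-c))) := by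
  have hexp : ∀ j ∈ Finset.range K,
      Real.exp (-lam * Uc N K j * (s-c))
        = Real.exp (-lam*(s-c))^(j) * Real.exp (-lam*(s-c))^(N-K) * Real.exp (-lam*(s-c)) := by
    intro j _
    rw [← Real.exp_nat_mul, ← Real.exp_nat_mul, ← Real.exp_add, ← Real.exp_add]
    congr 1
    rw [Uc_cast hKN]
    push_cast
    ring
  rw [Finset.sum_congr rfl (fun j hj => by rw [hexp j hj])]
  rw [densF]
  have hbin : (1 - Real.exp (-lam*(s-c)))^(K-1)
      = ∑ j ∈ Finset.range K, ((K-1).choose j : ℝ) * (-1)^j * Real.exp (-lam*(s-c))^j := by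
    rw [sub_eq_add_neg, add_comm, add_pow]
    rw [show K - 1 + 1 = K from by omega]
    apply Finset.sum_congr rfl
    intro j hj
    rw [neg_pow]
    ring
  rw [hbin, Finset.mul_sum, Finset.sum_mul, Finset.sum_mul]
  apply Finset.sum_congr rfl
  intro j _
  rw [Bc]
  ring

lemma hasDerivAt_G2 {lam c : ℝ} {N K : ℕ} (hK1 : 1 ≤ K) (hKN : K ≤ N) (s : ℝ) :
    HasDerivAt (fun t => ∑ j ∈ Finset.range K,
        Bc N K j / Uc N K j * (1 - Real.exp (-lam * Uc N K j * (t-c))))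
      (densF lam c N K s) s := by
  rw [densF_eq hK1 hKN]
  apply HasDerivAt.fun_sum
  intro j hj
  have hU := Uc_pos hKN j
  have hinner : HasDerivAt (fun t : ℝ => -lam * Uc N K j * (t-c)) (-lam * Uc N K j) s := by
    simpa using ((hasDerivAt_id s).sub_const c).const_mul (-lam * Uc N K j)
  have hexp := (Real.hasDerivAt_exp (-lam * Uc N K j * (s-c))).comp s hinner
  have : HasDerivAt (fun t : ℝ => Bc N K j / Uc N K j
      * (1 - Real.exp (-lam * Uc N K j * (t-c))))
      (Bc N K j / Uc N K j * (0 - Real.exp (-lam * Uc N K j * (s-c)) * (-lam * Uc N K j))) s :=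
    (((hasDerivAt_const s (1:ℝ)).sub hexp)).const_mul _
  refine this.congr_deriv ?_
  field_simp
  ring

lemma hasDerivAt_H2 {lam c : ℝ} {N K : ℕ} (hlam : 0 < lam) (hK1 : 1 ≤ K) (hKN : K ≤ N) (s : ℝ) :
    HasDerivAt (fun t => ∑ j ∈ Finset.range K,
        Bc N K j / Uc N K j * (-(t^2 + 2*t/(lam * Uc N K j) + 2/(lam * Uc N K j)^2)
          * Real.exp (-lam * Uc N K j * (t-c))))
      (s^2 * densF lam c N K s) s := by
  rw [densF_eq hK1 hKN, Finset.mul_sum]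
  apply HasDerivAt.fun_sum
  intro j hj
  have hU := Uc_pos hKN j
  have ha : lam * Uc N K j ≠ 0 := by positivity
  set A := lam * Uc N K j with hA
  have hinner : HasDerivAt (fun t : ℝ => -lam * Uc N K j * (t-c)) (-A) s := by
    simpa [hA] using ((hasDerivAt_id s).sub_const c).const_mul (-lam * Uc N K j)
  have hexp := (Real.hasDerivAt_exp (-lam * Uc N K j * (s-c))).comp s hinner
  have hpoly : HasDerivAt (fun t : ℝ => -(t^2 + 2*t/A + 2/A^2)) (-(2*s + 2/A)) s := by
    have h1 : HasDerivAt (fun t : ℝ => t^2) (2*s) s := by simpa using hasDerivAt_pow 2 s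
    have h2 : HasDerivAt (fun t : ℝ => 2*t/A) (2/A) s := by
      have := (hasDerivAt_id s).const_mul (2/A)
      simp only [mul_one] at this
      simpa using ((hasDerivAt_id s).const_mul 2).div_const A
    simpa using ((h1.add h2).add_const (2/A^2)).fun_neg
  have := (hpoly.mul hexp).const_mul (Bc N K j / Uc N K j)
  refine this.congr_deriv ?_
  simp only [Function.comp_apply, hA]
  field_simp
  ring

lemma densF_cont {lam c : ℝ} {N K : ℕ} : Continuous (densF lam c N K) := by
  unfold densF; fun_prop

lemma phiF_hasDerivAt {lam c : ℝ} {N K : ℕ} (hK1 : 1 ≤ K) (hKN : K ≤ N) (s : ℝ) :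
    HasDerivAt (fun t => phiP N K (1 - Real.exp (-lam*(t-c)))) (densF lam c N K s) s := by
  have hinner : HasDerivAt (fun t : ℝ => 1 - Real.exp (-lam*(t-c)))
      (lam * Real.exp (-lam*(s-c))) s := by
    have h1 : HasDerivAt (fun t : ℝ => -lam*(t-c)) (-lam) s := by
      simpa using ((hasDerivAt_id s).sub_const c).const_mul (-lam)
    have h2 := (Real.hasDerivAt_exp (-lam*(s-c))).comp s h1
    have := ((hasDerivAt_const s (1:ℝ)).sub h2)
    refine this.congr_deriv ?_
    ring_nf
  have := (phiP_hasDerivAt hK1 hKN (1 - Real.exp (-lam*(s-c)))).comp s hinner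
  refine this.congr_deriv ?_
  rw [densF, sub_sub_cancel]

lemma integral_densF {lam c : ℝ} {N K : ℕ} (hK1 : 1 ≤ K) (hKN : K ≤ N)
    {t : ℝ} (hct : c ≤ t) :
    ∫ x in c..t, densF lam c N K x = phiP N K (1 - Real.exp (-lam*(t-c))) := by
  have := intervalIntegral.integral_eq_sub_of_hasDerivAt
    (f := fun t => phiP N K (1 - Real.exp (-lam*(t-c))))
    (fun x _ => phiF_hasDerivAt hK1 hKN x) (densF_cont.intervalIntegrable c t)
  rw [this]
  have h0 : phiP N K (1 - Real.exp (-lam*(c-c))) = 0 := by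
    simp only [sub_self, mul_zero, Real.exp_zero, sub_self, phiP]
    apply Finset.sum_eq_zero
    intro m hm
    rw [Finset.mem_Icc] at hm
    rw [zero_pow (by omega)]
    ring
  rw [h0, sub_zero]

lemma integral_densF' {lam c : ℝ} {N K : ℕ} (hK1 : 1 ≤ K) (hKN : K ≤ N)
    {t : ℝ} (hct : c ≤ t) :
    ∫ x in c..t, densF lam c N K x
      = ∑ j ∈ Finset.range K, Bc N K j / Uc N K j * (1 - Real.exp (-lam * Uc N K j * (t-c))) := by
  have := intervalIntegral.integral_eq_sub_of_hasDerivAt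
    (f := fun t => ∑ j ∈ Finset.range K,
        Bc N K j / Uc N K j * (1 - Real.exp (-lam * Uc N K j * (t-c))))
    (fun x _ => hasDerivAt_G2 hK1 hKN x) (densF_cont.intervalIntegrable c t)
  rw [this]
  have h0 : ∑ j ∈ Finset.range K,
      Bc N K j / Uc N K j * (1 - Real.exp (-lam * Uc N K j * (c-c))) = 0 := by
    apply Finset.sum_eq_zero
    intro j _
    simp
  rw [h0, sub_zero]

lemma integral_sq_densF {lam c : ℝ} {N K : ℕ} (hlam : 0 < lam) (hK1 : 1 ≤ K) (hKN : K ≤ N)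
    {TD : ℝ} (hct : c ≤ TD) :
    ∫ x in c..TD, x^2 * densF lam c N K x
      = ∑ j ∈ Finset.range K, (Bc N K j / (lam ^ 2 * (Uc N K j) ^ 3)) *
          ((1 + c * lam * Uc N K j) ^ 2 + 1 -
            ((1 + TD * lam * Uc N K j) ^ 2 + 1) * Real.exp (-lam * Uc N K j * (TD - c))) := by
  have hcont : Continuous (fun x : ℝ => x^2 * densF lam c N K x) := (continuous_pow 2).mul densF_cont
  have := intervalIntegral.integral_eq_sub_of_hasDerivAt
    (f := fun t => ∑ j ∈ Finset.range K,
        Bc N K j / Uc N K j * (-(t^2 + 2*t/(lam * Uc N K j) + 2/(lam * Uc N K j)^2)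
          * Real.exp (-lam * Uc N K j * (t-c))))
    (fun x _ => hasDerivAt_H2 hlam hK1 hKN x) (hcont.intervalIntegrable c TD)
  rw [this]
  rw [← Finset.sum_sub_distrib]
  apply Finset.sum_congr rfl
  intro j _
  have hU := Uc_pos hKN j
  have hU' : Uc N K j ≠ 0 := ne_of_gt hU
  have hlam' : lam ≠ 0 := ne_of_gt hlam
  rw [show -lam * Uc N K j * (c - c) = 0 by ring, Real.exp_zero]
  field_simp
  ring

lemma phiP_zero {N K : ℕ} (hK1 : 1 ≤ K) : phiP N K 0 = 0 := by
  apply Finset.sum_eq_zero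
  intro m hm
  rw [Finset.mem_Icc] at hm
  rw [zero_pow (by omega)]
  ring

lemma phiP_nonneg {N K : ℕ} {p : ℝ} (h0 : 0 ≤ p) (h1 : p ≤ 1) : 0 ≤ phiP N K p := by
  apply Finset.sum_nonneg
  intro m _
  have : (0:ℝ) ≤ 1 - p := by linarith
  positivity

lemma densF_nonneg {lam c : ℝ} {N K : ℕ} (hlam : 0 ≤ lam) {s : ℝ} (hs : c ≤ s) :
    0 ≤ densF lam c N K s := by
  have he : Real.exp (-lam*(s-c)) ≤ 1 := by
    rw [← Real.exp_zero]
    apply Real.exp_le_exp.2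
    nlinarith
  have : (0:ℝ) ≤ 1 - Real.exp (-lam*(s-c)) := by linarith
  rw [densF]
  positivity


lemma measurableSet_count_ge {Ω : Type*} [MeasurableSpace Ω] {N : ℕ} (T : Fin N → Ω → ℝ)
    (hmeas : ∀ i, Measurable (T i)) (t : ℝ) (K : ℕ) :
    MeasurableSet {ω | K ≤ (Finset.univ.filter fun i => T i ω ≤ t).card} := by
  classical
  have hmc : Measurable (fun ω => (Finset.univ.filter fun i => T i ω ≤ t).card) := by
    have : (fun ω => (Finset.univ.filter fun i => T i ω ≤ t).card)
        = fun ω => ∑ i : Fin N, if T i ω ≤ t then 1 else 0 := by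
      funext ω; rw [Finset.card_filter]
    rw [this]
    exact Finset.measurable_sum _ (fun i _ =>
      Measurable.ite (measurableSet_le (hmeas i) measurable_const)
        measurable_const measurable_const)
  exact hmc (measurableSet_Ici (a := K))

theorem condSecondMoment_orderStat_given_before_deadline {Ω : Type*} [MeasurableSpace Ω]
    (μ : Measure Ω) [IsProbabilityMeasure μ]
    (N K : ℕ) (hK1 : 1 ≤ K) (hKN : K ≤ N)
    (lam c TD : ℝ) (hlam : 0 < lam) (hc : 0 < c) (hTD : c < TD)
    (T : Fin N → Ω → ℝ)
    (hCDF : ∀ i : Fin N, ∀ t : ℝ,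
      μ {ω | T i ω ≤ t} = ENNReal.ofReal (if t < c then 0 else 1 - Real.exp (-lam * (t - c))))
    (hmeas : ∀ i, Measurable (T i))
    (hindep : iIndepFun T μ)
    (hpos : 0 < 1 - Zc lam c TD N K) :
    (∫ ω in {ω | ordStat (fun i => T i ω) K < TD}, (ordStat (fun i => T i ω) K) ^ 2 ∂μ) /
        (μ {ω | ordStat (fun i => T i ω) K < TD}).toReal =
      (1 / (1 - Zc lam c TD N K)) * ∑ j ∈ Finset.range K,
        (Bc N K j / (lam ^ 2 * (Uc N K j) ^ 3)) *
          ((1 + c * lam * Uc N K j) ^ 2 + 1 -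
            ((1 + TD * lam * Uc N K j) ^ 2 + 1) * Vc lam c TD N K j) := by
  classical
  set X : Ω → ℝ := fun ω => ordStat (fun i => T i ω) K with hX
  set F : ℝ → ℝ := fun t => if t < c then 0 else 1 - Real.exp (-lam * (t - c)) with hF
  have hF0 : ∀ t, 0 ≤ F t := by
    intro t
    rw [hF]
    by_cases h : t < c
    · simp [h]
    · push_neg at h
      simp only [hF, if_neg (not_lt.2 h)]
      have : Real.exp (-lam*(t-c)) ≤ 1 := by
        rw [← Real.exp_zero]; apply Real.exp_le_exp.2; nlinarith
      linarith
  have hF1 : ∀ t, F t ≤ 1 := by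
    intro t
    rw [hF]
    by_cases h : t < c
    · simp [h]
    · simp only [if_neg h]
      have : 0 < Real.exp (-lam*(t-c)) := Real.exp_pos _
      linarith
  -- CDF of X
  have hXle : ∀ t : ℝ, {ω | X ω ≤ t} = {ω | K ≤ (Finset.univ.filter fun i => T i ω ≤ t).card} := by
    intro t
    ext ω
    simp only [Set.mem_setOf_eq, hX]
    exact ordStat_le_iff _ hK1 hKN t
  have hCDFX : ∀ t : ℝ, μ {ω | X ω ≤ t} = ENNReal.ofReal (phiP N K (F t)) := by
    intro t
    rw [hXle t]
    rw [meas_count_ge μ T hmeas hindep t (F t) (hF0 t) (hF1 t) (fun i => hCDF i t) K]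
    rfl
  have hXmeas : Measurable X := by
    apply measurable_of_Iic
    intro t
    have : X ⁻¹' Set.Iic t = {ω | X ω ≤ t} := rfl
    rw [this, hXle t]
    exact measurableSet_count_ge T hmeas t K
  -- the mapped measure and the density measure
  set ν : Measure ℝ := μ.map X with hν
  have : IsProbabilityMeasure ν := Measure.isProbabilityMeasure_map hXmeas.aemeasurable
  set D : ℝ → ENNReal := fun s => ENNReal.ofReal ((Set.Ici c).indicator (densF lam c N K) s) with hD
  set ν' : Measure ℝ := volume.withDensity D with hν'
  have hDind : ∀ s, D s = (Set.Ici c).indicator (fun s => ENNReal.ofReal (densF lam c N K s)) s := by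
    intro s
    by_cases h : s ∈ Set.Ici c
    · simp [hD, Set.indicator_of_mem h]
    · simp [hD, Set.indicator_of_notMem h]
  have hν'Iic : ∀ t : ℝ, ν' (Set.Iic t) = ENNReal.ofReal (phiP N K (F t)) := by
    intro t
    rw [hν', withDensity_apply _ measurableSet_Iic]
    simp_rw [hDind]
    rw [lintegral_indicator measurableSet_Ici, Measure.restrict_restrict measurableSet_Ici,
      Set.Ici_inter_Iic]
    by_cases h : t < c
    · rw [show Set.Icc c t = ∅ by rw [Set.Icc_eq_empty]; exact not_le.2 h]
      simp [hF, h, phiP_zero hK1]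
    · push_neg at h
      have hae : 0 ≤ᵐ[volume.restrict (Set.Icc c t)] densF lam c N K := by
        apply (MeasureTheory.ae_restrict_iff' measurableSet_Icc).2
        exact Filter.Eventually.of_forall (fun s hs => densF_nonneg hlam.le hs.1)
      rw [← ofReal_integral_eq_lintegral_ofReal densF_cont.integrableOn_Icc hae]
      rw [MeasureTheory.integral_Icc_eq_integral_Ioc,
        ← intervalIntegral.integral_of_le h, integral_densF hK1 hKN h]
      simp only [hF, if_neg (not_lt.2 h)]
  have hνIic : ∀ t : ℝ, ν (Set.Iic t) = ENNReal.ofReal (phiP N K (F t)) := by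
    intro t
    rw [hν, Measure.map_apply hXmeas measurableSet_Iic]
    exact hCDFX t
  have hmeq : ν = ν' := by
    apply MeasureTheory.Measure.ext_of_Iic
    intro a
    rw [hνIic a, hν'Iic a]
  -- the closed form of the CDF at points ≥ c
  have hclosed : ∀ t : ℝ, c ≤ t → phiP N K (F t)
      = ∑ j ∈ Finset.range K, Bc N K j / Uc N K j * (1 - Real.exp (-lam * Uc N K j * (t-c))) := by
    intro t ht
    rw [← integral_densF' hK1 hKN ht, integral_densF hK1 hKN ht]
    simp only [hF, if_neg (not_lt.2 ht)]
  -- sum of Bc/Uc equals one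
  have hBU1 : ∑ j ∈ Finset.range K, Bc N K j / Uc N K j = 1 := by
    have hmono : Monotone (fun n : ℕ => {ω | X ω ≤ c + n}) := by
      intro m n hmn ω h
      have : (m:ℝ) ≤ n := Nat.cast_le.2 hmn
      simp only [Set.mem_setOf_eq] at h ⊢
      linarith
    have htends := tendsto_measure_iUnion_atTop (μ := μ) hmono
    have hunion : ⋃ n : ℕ, {ω | X ω ≤ c + n} = Set.univ := by
      ext ω
      simp only [Set.mem_iUnion, Set.mem_univ, iff_true, Set.mem_setOf_eq]
      obtain ⟨n, hn⟩ := exists_nat_ge (X ω - c)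
      exact ⟨n, by linarith⟩
    rw [hunion, measure_univ] at htends
    have heval : ∀ n : ℕ, μ {ω | X ω ≤ c + n}
        = ENNReal.ofReal (∑ j ∈ Finset.range K,
            Bc N K j / Uc N K j * (1 - Real.exp (-lam * Uc N K j * n))) := by
      intro n
      rw [hCDFX, hclosed (c + n) (by linarith [Nat.cast_nonneg (α := ℝ) n])]
      congr 1
      apply Finset.sum_congr rfl
      intro j _
      congr 2
      ring
    have hlim : Filter.Tendsto (fun n : ℕ => ∑ j ∈ Finset.range K,
        Bc N K j / Uc N K j * (1 - Real.exp (-lam * Uc N K j * n))) atTop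
        (nhds (∑ j ∈ Finset.range K, Bc N K j / Uc N K j)) := by
      apply tendsto_finset_sum
      intro j _
      have hU := Uc_pos hKN j
      have h1 : Filter.Tendsto (fun n : ℕ => lam * Uc N K j * (n:ℝ)) atTop atTop :=
        (tendsto_natCast_atTop_atTop).const_mul_atTop (by positivity)
      have h2 : Filter.Tendsto (fun n : ℕ => -lam * Uc N K j * (n:ℝ)) atTop atBot := by
        have := tendsto_neg_atBot_iff.2 h1
        apply this.congr' (Filter.Eventually.of_forall (fun n => by ring))
      have h3 : Filter.Tendsto (fun n : ℕ => Real.exp (-lam * Uc N K j * (n:ℝ))) atTop (nhds 0) :=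
        Real.tendsto_exp_atBot.comp h2
      have h4 := (tendsto_const_nhds (x := (1:ℝ)) (f := atTop (α := ℕ))).sub h3
      have h5 := h4.const_mul (Bc N K j / Uc N K j)
      rw [sub_zero, mul_one] at h5
      exact h5
    have hlim2 : Filter.Tendsto (fun n : ℕ => μ {ω | X ω ≤ c + (n:ℝ)}) atTop
        (nhds (ENNReal.ofReal (∑ j ∈ Finset.range K, Bc N K j / Uc N K j))) := by
      have h6 := (ENNReal.continuous_ofReal.tendsto _).comp hlim
      apply h6.congr
      intro n
      rw [Function.comp_apply, ← heval n]
    have := tendsto_nhds_unique hlim2 htends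
    rwa [ENNReal.ofReal_eq_one] at this
  -- denominator
  have hsetlt : {ω | X ω < TD} = X ⁻¹' Set.Iio TD := rfl
  have hdenom : μ {ω | X ω < TD} = ENNReal.ofReal (1 - Zc lam c TD N K) := by
    rw [hsetlt, ← Measure.map_apply hXmeas measurableSet_Iio, ← hν, hmeq]
    have hptz : ν' {TD} = 0 := by
      rw [hν', withDensity_apply _ (measurableSet_singleton TD)]
      rw [Measure.restrict_singleton]
      simp
    have : ν' (Set.Iio TD) = ν' (Set.Iic TD) := by
      have hu : Set.Iic TD = Set.Iio TD ∪ {TD} := by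
        rw [Set.Iio_union_right]
      rw [hu, measure_union ?_ (measurableSet_singleton TD), hptz, add_zero]
      · simp [Set.disjoint_singleton_right]
    rw [this, hν'Iic TD, hclosed TD hTD.le]
    congr 1
    rw [Zc, eq_sub_iff_add_eq]
    conv_rhs => rw [← hBU1]
    rw [← Finset.sum_add_distrib]
    apply Finset.sum_congr rfl
    intro j _
    rw [Vc]
    ring
  -- numerator
  have hnum : (∫ ω in {ω | X ω < TD}, (X ω) ^ 2 ∂μ)
      = ∑ j ∈ Finset.range K,
        (Bc N K j / (lam ^ 2 * (Uc N K j) ^ 3)) *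
          ((1 + c * lam * Uc N K j) ^ 2 + 1 -
            ((1 + TD * lam * Uc N K j) ^ 2 + 1) * Vc lam c TD N K j) := by
    rw [hsetlt]
    have hsm : AEStronglyMeasurable (fun x : ℝ => x^2) ν := (continuous_pow 2).aestronglyMeasurable
    rw [show (∫ ω in X ⁻¹' Set.Iio TD, (X ω) ^ 2 ∂μ)
        = ∫ x in Set.Iio TD, x^2 ∂(μ.map X) from
      (MeasureTheory.setIntegral_map measurableSet_Iio hsm hXmeas.aemeasurable).symm]
    rw [← hν, hmeq, hν', restrict_withDensity measurableSet_Iio]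
    have hDeq : D = fun s => ((Real.toNNReal ((Set.Ici c).indicator (densF lam c N K) s) : NNReal) : ENNReal) := rfl
    rw [hDeq]
    have hDmeas : Measurable (fun s : ℝ => Real.toNNReal ((Set.Ici c).indicator (densF lam c N K) s)) :=
      ((densF_cont.measurable).indicator measurableSet_Ici).real_toNNReal
    rw [integral_withDensity_eq_integral_smul hDmeas]
    have hind : ∀ x : ℝ, (Real.toNNReal ((Set.Ici c).indicator (densF lam c N K) x)) • (x^2)
        = (Set.Ici c).indicator (fun x => x^2 * densF lam c N K x) x := by
      intro x
      rw [NNReal.smul_def]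
      by_cases h : x ∈ Set.Ici c
      · simp only [Set.indicator_of_mem h, smul_eq_mul,
          Real.coe_toNNReal _ (densF_nonneg hlam.le h)]
        ring
      · simp [Set.indicator_of_notMem h]
    simp_rw [hind]
    rw [MeasureTheory.setIntegral_indicator measurableSet_Ici]
    rw [show Set.Iio TD ∩ Set.Ici c = Set.Ico c TD from by
      rw [Set.inter_comm, Set.Ici_inter_Iio]]
    rw [← MeasureTheory.integral_Icc_eq_integral_Ico, MeasureTheory.integral_Icc_eq_integral_Ioc, ← intervalIntegral.integral_of_le hTD.le]
    rw [integral_sq_densF hlam hK1 hKN hTD.le]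
    apply Finset.sum_congr rfl
    intro j _
    rw [Vc]
  rw [show {ω | ordStat (fun i => T i ω) K < TD} = {ω | X ω < TD} from rfl]
  have : (∫ ω in {ω | X ω < TD}, (ordStat (fun i => T i ω) K) ^ 2 ∂μ)
      = (∫ ω in {ω | X ω < TD}, (X ω) ^ 2 ∂μ) := rfl
  rw [this, hnum, hdenom, ENNReal.toReal_ofReal hpos.le, div_eq_mul_inv, mul_comm, one_div]
end
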